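/- For all integers 0 ≤ m ≤ n: ((−1)^m/π) √(m!/n!) ∫₀^∞ (√2 r)^{n−m} e^{−r²} L_m^{(n−m)}(2r²) r dr = ((−1)^{m+n}/π) √(m! n!) Σ_{k=n}^{m+n} (−1)^k 2^{k−(m+n)/2−1} Γ(k − (m+n)/2 + 1) / ((m+n−k)! (k−m)! (k−n)!), where Γ is the Gamma function and the powers of 2 are real powers (the exponents may be half-integers). -/

import Mathlib

open MeasureTheory Real

noncomputable section

/-- The associated Laguerre polynomial
`L_m^{(k)}(x) = Σ_{j=0}^{m} (−1)^j C(m+k, m−j) x^j / j!`. -/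
def laguerreL (m k : ℕ) (x : ℝ) : ℝ :=
  ∑ j ∈ Finset.range (m + 1),
    (-1 : ℝ) ^ j * (Nat.choose (m + k) (m - j) : ℝ) * x ^ j / (Nat.factorial j : ℝ)

/-- The value `w^{ang}_{m,n}(0)` of the angular Wigner function of the number-state
matrix element at angle 0 (for `m ≤ n`):
`((−1)^m/π) √(m!/n!) ∫₀^∞ (√2 r)^{n−m} e^{−r²} L_m^{(n−m)}(2r²) r dr`. -/
def wang (m n : ℕ) : ℝ :=
  ((-1 : ℝ) ^ m / π) * Real.sqrt ((Nat.factorial m : ℝ) / (Nat.factorial n : ℝ)) *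
    ∫ r in Set.Ioi (0 : ℝ),
      (Real.sqrt 2 * r) ^ (n - m) * Real.exp (-r ^ 2) * laguerreL m (n - m) (2 * r ^ 2) * r

lemma integrable_aux' (s : ℝ) (hs : -1 < s) :
    IntegrableOn (fun r : ℝ => r ^ s * Real.exp (-r ^ 2)) (Set.Ioi 0) := by
  have := integrableOn_rpow_mul_exp_neg_mul_sq one_pos hs
  simpa using this

lemma integral_pow_exp' (s : ℝ) (hs : -1 < s) :
    ∫ r in Set.Ioi (0 : ℝ), r ^ s * Real.exp (-r ^ 2)
      = (1 / 2) * Real.Gamma ((s + 1) / 2) := by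
  rw [← integral_rpow_mul_exp_neg_rpow two_pos hs]
  refine setIntegral_congr_fun measurableSet_Ioi (fun x hx => ?_)
  rw [show (2:ℝ) = ((2:ℕ):ℝ) by norm_num, Real.rpow_natCast]

lemma sqrt_div_fact' (x y : ℝ) (hx : 0 ≤ x) :
    Real.sqrt (x / y) * y = Real.sqrt (x * y) := by
  rw [Real.sqrt_div hx, Real.sqrt_mul hx, div_mul_eq_mul_div, mul_div_assoc, Real.div_sqrt]

set_option maxHeartbeats 2000000 in
/-- For all integers `0 ≤ m ≤ n`,
`((−1)^m/π) √(m!/n!) ∫₀^∞ (√2 r)^{n−m} e^{−r²} L_m^{(n−m)}(2r²) r dr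
 = ((−1)^{m+n}/π) √(m!n!) Σ_{k=n}^{m+n} (−1)^k 2^{k−(m+n)/2−1} Γ(k−(m+n)/2+1)
   / ((m+n−k)!(k−m)!(k−n)!)`. -/
theorem wang_eq_sum (m n : ℕ) (hmn : m ≤ n) :
    wang m n =
      ((-1 : ℝ) ^ (m + n) / π) *
        Real.sqrt ((Nat.factorial m : ℝ) * (Nat.factorial n : ℝ)) *
        ∑ k ∈ Finset.Icc n (m + n),
          (-1 : ℝ) ^ k * (2 : ℝ) ^ ((k : ℝ) - ((m + n : ℕ) : ℝ) / 2 - 1) *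
            Real.Gamma ((k : ℝ) - ((m + n : ℕ) : ℝ) / 2 + 1) /
            ((Nat.factorial (m + n - k) : ℝ) * (Nat.factorial (k - m) : ℝ) *
              (Nat.factorial (k - n) : ℝ)) := by
  obtain ⟨a, rfl⟩ : ∃ a, n = m + a := ⟨n - m, (Nat.add_sub_cancel' hmn).symm⟩
  have hnm : m + a - m = a := by omega
  -- the coefficient
  set c : ℕ → ℝ := fun j =>
    Real.sqrt 2 ^ a * ((-1 : ℝ) ^ j * (Nat.choose (m + a) (m - j) : ℝ) * 2 ^ j
      / (Nat.factorial j : ℝ)) with hc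
  -- rewrite the integral
  have hint : (∫ r in Set.Ioi (0 : ℝ),
      (Real.sqrt 2 * r) ^ (m + a - m) * Real.exp (-r ^ 2) *
        laguerreL m (m + a - m) (2 * r ^ 2) * r)
      = ∑ j ∈ Finset.range (m + 1),
          c j * ((1 / 2) * Real.Gamma ((((a + 2 * j + 1 : ℕ) : ℝ) + 1) / 2)) := by
    have h1 : ∀ r ∈ Set.Ioi (0 : ℝ),
        (Real.sqrt 2 * r) ^ (m + a - m) * Real.exp (-r ^ 2) *
          laguerreL m (m + a - m) (2 * r ^ 2) * r
        = ∑ j ∈ Finset.range (m + 1),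
            c j * (r ^ (((a + 2 * j + 1 : ℕ) : ℝ)) * Real.exp (-r ^ 2)) := by
      intro r hr
      rw [hnm, laguerreL]
      simp only [Finset.mul_sum, Finset.sum_mul]
      refine Finset.sum_congr rfl fun j hj => ?_
      rw [Real.rpow_natCast, hc]
      ring
    rw [setIntegral_congr_fun measurableSet_Ioi h1, integral_finset_sum]
    · refine Finset.sum_congr rfl fun j hj => ?_
      rw [integral_const_mul, integral_pow_exp']
      have : (0:ℝ) ≤ ((a + 2 * j + 1 : ℕ) : ℝ) := Nat.cast_nonneg _
      linarith
    · intro j hj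
      have : (0:ℝ) ≤ ((a + 2 * j + 1 : ℕ) : ℝ) := Nat.cast_nonneg _
      exact (integrable_aux' _ (by linarith)).const_mul _
  rw [wang, hint]
  -- reindex the RHS sum
  rw [← Finset.Ico_add_one_right_eq_Icc, Finset.sum_Ico_eq_sum_range]
  have hidx : m + (m + a) + 1 - (m + a) = m + 1 := by omega
  rw [hidx]
  rw [Finset.mul_sum, Finset.mul_sum]
  refine Finset.sum_congr rfl fun j hj => ?_
  have hjm : j ≤ m := by simpa [Nat.lt_succ_iff] using hj
  -- simplify nat subtractions
  have e1 : m + (m + a) - (m + a + j) = m - j := by omega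
  have e2 : m + a + j - m = a + j := by omega
  have e3 : m + a + j - (m + a) = j := by omega
  rw [e1, e2, e3]
  -- now pure real algebra
  have hfac : (Nat.choose (m + a) (m - j) : ℝ) * (Nat.factorial (m - j))
      * (Nat.factorial (a + j)) = (Nat.factorial (m + a)) := by
    have := Nat.choose_mul_factorial_mul_factorial (show m - j ≤ m + a by omega)
    have h4 : m + a - (m - j) = a + j := by omega
    rw [h4] at this
    exact_mod_cast this
  -- sqrt fact
  have hsq : Real.sqrt ((Nat.factorial m : ℝ) / (Nat.factorial (m + a) : ℝ))
      * (Nat.factorial (m + a) : ℝ)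
      = Real.sqrt ((Nat.factorial m : ℝ) * (Nat.factorial (m + a) : ℝ)) :=
    sqrt_div_fact' _ _ (by positivity)
  -- powers of two
  have h2 : Real.sqrt 2 ^ a * (2 : ℝ) ^ j * (1 / 2)
      = (2 : ℝ) ^ (((m + a + j : ℕ) : ℝ) - ((m + (m + a) : ℕ) : ℝ) / 2 - 1) := by
    rw [show Real.sqrt 2 = (2 : ℝ) ^ ((1 : ℝ) / 2) from Real.sqrt_eq_rpow 2,
      ← Real.rpow_natCast ((2 : ℝ) ^ ((1:ℝ)/2)) a, ← Real.rpow_natCast (2 : ℝ) j,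
      ← Real.rpow_mul (by norm_num), show (1:ℝ)/2 = (2:ℝ) ^ (-(1:ℝ)) by
        rw [Real.rpow_neg_one]; norm_num,
      ← Real.rpow_add (by norm_num), ← Real.rpow_add (by norm_num)]
    congr 1
    push_cast
    ring
  -- gamma args
  have hg : ((((a + 2 * j + 1 : ℕ) : ℝ) + 1) / 2)
      = ((m + a + j : ℕ) : ℝ) - ((m + (m + a) : ℕ) : ℝ) / 2 + 1 := by
    push_cast; ring
  -- signs
  have hsgn : ((-1 : ℝ) ^ (m + (m + a))) * ((-1 : ℝ) ^ (m + a + j))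
      = (-1 : ℝ) ^ m * (-1 : ℝ) ^ j := by
    rw [← pow_add, ← pow_add, show m + (m + a) + (m + a + j) = 2 * (m + a) + (m + j) by ring,
      pow_add, pow_mul, neg_one_sq, one_pow, one_mul, pow_add]
  rw [hc, hg]
  set G := Real.Gamma (((m + a + j : ℕ) : ℝ) - ((m + (m + a) : ℕ) : ℝ) / 2 + 1) with hG
  rw [← h2, ← hsq]
  set Q := Real.sqrt ((Nat.factorial m : ℝ) / (Nat.factorial (m + a) : ℝ)) with hQ
  have hπ : (π : ℝ) ≠ 0 := Real.pi_ne_zero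
  have hfj : (Nat.factorial j : ℝ) ≠ 0 := by positivity
  have hfmj : (Nat.factorial (m - j) : ℝ) ≠ 0 := by positivity
  have hfaj : (Nat.factorial (a + j) : ℝ) ≠ 0 := by positivity
  field_simp
  linear_combination ((-1:ℝ)^m * (-1:ℝ)^j * (Q * G)) * hfac
    - ((Nat.factorial (m + a) : ℝ) * (Q * G)) * hsgn
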